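/- If a graph G has exactly C(k,2) vertices of degree 4 and admits a straight-line drawing in ℝ³ covered by k lines, then all k lines lie in a common plane; consequently ρ¹_3(G) = ρ¹_2(G) for such G. -/

import Mathlib

/-- `L` is a line in `ℝ^d`. -/
def IsLine {d : ℕ} (L : Set (Fin d → ℝ)) : Prop :=
  ∃ p v : Fin d → ℝ, v ≠ 0 ∧ L = {x | ∃ t : ℝ, x = p + t • v}

/-- A `k`-line cover of a graph `G` in `ℝ^d`: a crossing-free straight-line drawing of
`G` together with `k` lines whose union contains the drawing (all vertices and edges). -/
structure LineCover {V : Type*} (G : SimpleGraph V) (d k : ℕ) where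
  pos : V → (Fin d → ℝ)
  inj : Function.Injective pos
  lines : Fin k → Set (Fin d → ℝ)
  isLine : ∀ i, IsLine (lines i)
  coversV : ∀ v, ∃ i, pos v ∈ lines i
  coversE : ∀ ⦃u v⦄, G.Adj u v → ∃ i, segment ℝ (pos u) (pos v) ⊆ lines i
  noCross : ∀ ⦃u v a b⦄, G.Adj u v → G.Adj a b → ({u, v} : Set V) ≠ {a, b} →
    ∀ x ∈ segment ℝ (pos u) (pos v) ∩ segment ℝ (pos a) (pos b),
      ∃ w, (w = u ∨ w = v) ∧ (w = a ∨ w = b) ∧ x = pos w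

/-- The line cover number `ρ¹_d(G)`: the minimum number of lines in `ℝ^d` whose union
contains a crossing-free straight-line drawing of `G`. -/
noncomputable def rho1 {V : Type*} (G : SimpleGraph V) (d : ℕ) : ℕ :=
  sInf {k | Nonempty (LineCover G d k)}

/-- `P` is a plane in `ℝ³`. -/
def IsPlane (P : Set (Fin 3 → ℝ)) : Prop :=
  ∃ p u v : Fin 3 → ℝ, LinearIndependent ℝ ![u, v] ∧
    P = {x | ∃ s t : ℝ, x = p + s • u + t • v}

/-
A vertex with three neighbours cannot have all its edges on one line (two of them would leave it
in the same direction and overlap), so it is a crossing of two distinct lines of the cover, and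
distinct such vertices give distinct pairs of lines. With exactly `C(k, 2)` vertices of degree 4
every pair of lines therefore crosses, at pairwise distinct points; then no three lines are
concurrent, and every further line meets the first two in two distinct points of their plane.
An optimal cover in `ℝ³` uses at most `k` lines, so it is extremal too and projects affinely
onto `ℝ²`; conversely `ℝ²` embeds affinely in `ℝ³`.
-/

namespace IsLine

variable {d : ℕ} {L M : Set (Fin d → ℝ)}

theorem exists_eq_add_smul (hL : IsLine L) {x : Fin d → ℝ} (hx : x ∈ L) :
    ∃ u : Fin d → ℝ, u ≠ 0 ∧ L = {y | ∃ t : ℝ, y = x + t • u} := by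
  obtain ⟨p, u, hu, rfl⟩ := hL
  obtain ⟨t₀, rfl⟩ := hx
  refine ⟨u, hu, Set.ext fun y => ⟨?_, ?_⟩⟩
  · rintro ⟨t, rfl⟩
    exact ⟨t - t₀, by module⟩
  · rintro ⟨t, rfl⟩
    exact ⟨t₀ + t, by module⟩

theorem eq_affineSpan_pair (hL : IsLine L) {a b : Fin d → ℝ} (ha : a ∈ L) (hb : b ∈ L)
    (hab : a ≠ b) : L = line[ℝ, a, b] := by
  obtain ⟨u, -, rfl⟩ := hL.exists_eq_add_smul ha
  obtain ⟨t₀, rfl⟩ := hb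
  have ht₀ : t₀ ≠ 0 := by rintro rfl; simp at hab
  ext y
  simp only [SetLike.mem_coe, mem_affineSpan_pair_iff_exists_lineMap_eq,
    AffineMap.lineMap_apply_module']
  constructor
  · rintro ⟨t, rfl⟩
    exact ⟨t / t₀, by rw [add_sub_cancel_left, smul_smul, div_mul_cancel₀ _ ht₀, add_comm]⟩
  · rintro ⟨r, rfl⟩
    exact ⟨r * t₀, by module⟩

theorem eq_of_mem_of_mem (hL : IsLine L) (hM : IsLine M) {a b : Fin d → ℝ} (haL : a ∈ L)
    (haM : a ∈ M) (hbL : b ∈ L) (hbM : b ∈ M) (hab : a ≠ b) : L = M := by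
  rw [hL.eq_affineSpan_pair haL hbL hab, hM.eq_affineSpan_pair haM hbM hab]

theorem eq_of_ne (hL : IsLine L) (hM : IsLine M) (hLM : L ≠ M) {a b : Fin d → ℝ} (haL : a ∈ L)
    (haM : a ∈ M) (hbL : b ∈ L) (hbM : b ∈ M) : a = b := by
  by_contra hab
  exact hLM (hL.eq_of_mem_of_mem hM haL haM hbL hbM hab)

theorem subset_of_mem (hL : IsLine L) {a b : Fin d → ℝ} (ha : a ∈ L) (hb : b ∈ L) (hab : a ≠ b)
    {P : AffineSubspace ℝ (Fin d → ℝ)} (haP : a ∈ P) (hbP : b ∈ P) : L ⊆ P := by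
  rw [hL.eq_affineSpan_pair ha hb hab]
  exact affineSpan_le.mpr (Set.insert_subset haP (Set.singleton_subset_iff.mpr hbP))

theorem image {e : ℕ} (hL : IsLine L) (f : (Fin d → ℝ) →ᵃ[ℝ] (Fin e → ℝ)) (hf : Set.InjOn f L) :
    IsLine (f '' L) := by
  obtain ⟨p, u, hu, rfl⟩ := hL
  have hf_add : ∀ t : ℝ, f (p + t • u) = f p + t • f.linear u := fun t => by
    rw [add_comm p, ← vadd_eq_add, AffineMap.map_vadd, map_smul, vadd_eq_add, add_comm]
  have hfu : f.linear u ≠ 0 := by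
    intro h
    have : p + (1 : ℝ) • u = p + (0 : ℝ) • u :=
      hf ⟨1, rfl⟩ ⟨0, rfl⟩ (by simp only [hf_add, h, smul_zero])
    simp [hu] at this
  refine ⟨f p, f.linear u, hfu, Set.ext fun y => ⟨?_, ?_⟩⟩
  · rintro ⟨_, ⟨t, rfl⟩, rfl⟩
    exact ⟨t, hf_add t⟩
  · rintro ⟨t, rfl⟩
    exact ⟨p + t • u, ⟨t, rfl⟩, hf_add t⟩

end IsLine

theorem AffineSubspace.coe_mk'_span_pair {E : Type*} [AddCommGroup E] [Module ℝ E] (p u v : E) :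
    (AffineSubspace.mk' p (Submodule.span ℝ {u, v}) : Set E) =
      {x | ∃ s t : ℝ, x = p + s • u + t • v} := by
  ext x
  simp only [SetLike.mem_coe, AffineSubspace.mem_mk', vsub_eq_sub, Submodule.mem_span_pair]
  constructor
  · rintro ⟨s, t, h⟩
    exact ⟨s, t, by rw [add_assoc, h, add_sub_cancel]⟩
  · rintro ⟨s, t, rfl⟩
    exact ⟨s, t, by abel⟩

theorem IsLine.exists_isPlane_superset {L : Set (Fin 3 → ℝ)} (hL : IsLine L) :
    ∃ P : AffineSubspace ℝ (Fin 3 → ℝ), IsPlane P ∧ L ⊆ P := by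
  obtain ⟨p, u, hu, rfl⟩ := hL
  have hlt : (ℝ ∙ u) < ⊤ := by
    refine Submodule.lt_top_of_finrank_lt_finrank ?_
    rw [finrank_span_singleton hu, Module.finrank_fin_fun]
    norm_num
  obtain ⟨w, -, hw⟩ := SetLike.exists_of_lt hlt
  have huw : LinearIndependent ℝ ![u, w] := (LinearIndependent.pair_iff' hu).mpr fun a h =>
    hw (h ▸ Submodule.smul_mem _ a (Submodule.mem_span_singleton_self u))
  refine ⟨.mk' p (Submodule.span ℝ {u, w}), ⟨p, u, w, huw, AffineSubspace.coe_mk'_span_pair ..⟩, ?_⟩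
  rintro _ ⟨t, rfl⟩
  rw [AffineSubspace.coe_mk'_span_pair]
  exact ⟨t, 0, by simp⟩

theorem IsLine.exists_isPlane_superset_of_ne {L M : Set (Fin 3 → ℝ)} (hL : IsLine L)
    (hM : IsLine M) (hne : L ≠ M) {x : Fin 3 → ℝ} (hxL : x ∈ L) (hxM : x ∈ M) :
    ∃ P : AffineSubspace ℝ (Fin 3 → ℝ), IsPlane P ∧ L ⊆ P ∧ M ⊆ P := by
  obtain ⟨u, hu, hLu⟩ := hL.exists_eq_add_smul hxL
  obtain ⟨w, hw, hMw⟩ := hM.exists_eq_add_smul hxM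
  have huw : LinearIndependent ℝ ![u, w] := by
    refine (LinearIndependent.pair_iff' hu).mpr fun a h => hne ?_
    refine hL.eq_of_mem_of_mem hM hxL hxM (by rw [hLu]; exact ⟨a, by rw [h]⟩)
      (by rw [hMw]; exact ⟨1, by rw [one_smul]⟩) ?_
    simpa using hw
  refine ⟨.mk' x (Submodule.span ℝ {u, w}), ⟨x, u, w, huw, AffineSubspace.coe_mk'_span_pair ..⟩,
    ?_, ?_⟩
  · rw [AffineSubspace.coe_mk'_span_pair, hLu]
    rintro _ ⟨t, rfl⟩
    exact ⟨t, 0, by simp⟩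
  · rw [AffineSubspace.coe_mk'_span_pair, hMw]
    rintro _ ⟨t, rfl⟩
    exact ⟨0, t, by simp⟩

theorem exists_isPlane_of_pairwise_crossing {ι : Type*} (L : ι → Set (Fin 3 → ℝ))
    (hL : ∀ i, IsLine (L i)) (hcross : ∀ i j, i ≠ j → L i ≠ L j ∧ (L i ∩ L j).Nonempty)
    (hconc : ∀ i j l, i ≠ j → i ≠ l → j ≠ l → L i ∩ L j ∩ L l = ∅) :
    ∃ P, IsPlane P ∧ ∀ i, L i ⊆ P := by
  by_cases h : ∃ i₀ i₁ : ι, i₀ ≠ i₁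
  · obtain ⟨i₀, i₁, h01⟩ := h
    obtain ⟨hne, x, hx0, hx1⟩ := hcross i₀ i₁ h01
    obtain ⟨P, hP, h0, h1⟩ := (hL i₀).exists_isPlane_superset_of_ne (hL i₁) hne hx0 hx1
    refine ⟨P, hP, fun i => ?_⟩
    rcases eq_or_ne i i₀ with rfl | hi0
    · exact h0
    rcases eq_or_ne i i₁ with rfl | hi1
    · exact h1
    obtain ⟨-, a, ha0, hai⟩ := hcross i₀ i (Ne.symm hi0)
    obtain ⟨-, b, hb1, hbi⟩ := hcross i₁ i (Ne.symm hi1)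
    refine (hL i).subset_of_mem hai hbi ?_ (h0 ha0) (h1 hb1)
    rintro rfl
    exact (hconc i₀ i₁ i h01 (Ne.symm hi0) (Ne.symm hi1)).subset ⟨⟨ha0, hb1⟩, hai⟩
  · push Not at h
    obtain ⟨M, hM, hLM⟩ : ∃ M, IsLine M ∧ ∀ i, L i ⊆ M := by
      rcases isEmpty_or_nonempty ι with hι | ⟨⟨i₀⟩⟩
      · exact ⟨_, ⟨0, Pi.single 0 1, by simp, rfl⟩, isEmptyElim⟩
      · exact ⟨L i₀, hL i₀, fun i => (congrArg L (h i i₀)).subset⟩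
    obtain ⟨P, hP, hMP⟩ := hM.exists_isPlane_superset
    exact ⟨P, hP, fun i => (hLM i).trans hMP⟩

theorem IsPlane.exists_injOn {P : Set (Fin 3 → ℝ)} (hP : IsPlane P) :
    ∃ f : (Fin 3 → ℝ) →ᵃ[ℝ] (Fin 2 → ℝ), Set.InjOn f P := by
  obtain ⟨p, u, v, huv, rfl⟩ := hP
  obtain ⟨g, hg⟩ := LinearMap.exists_leftInverse_of_injective (Fintype.linearCombination ℝ ![u, v])
    (LinearMap.ker_eq_bot.2 (linearIndependent_iff_injective_fintypeLinearCombination.1 huv))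
  have hcoord (s t : ℝ) : g (s • u + t • v) = ![s, t] := by
    simpa [Fintype.linearCombination_apply, Fin.sum_univ_two] using LinearMap.congr_fun hg ![s, t]
  refine ⟨g.toAffineMap.comp (AffineEquiv.vaddConst ℝ p).symm.toAffineMap, ?_⟩
  rintro _ ⟨s, t, rfl⟩ _ ⟨s', t', rfl⟩ h
  obtain ⟨rfl, rfl⟩ : s = s' ∧ t = t' := by simpa [add_assoc, hcoord] using h
  rfl

theorem add_smul_mem_segment {E : Type*} [AddCommGroup E] [Module ℝ E] (p u : E) {s t : ℝ}
    (hst : 0 < s * t) (hle : |s| ≤ |t|) : p + s • u ∈ segment ℝ p (p + t • u) := by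
  have ht : t ≠ 0 := by rintro rfl; simp at hst
  have hpos : 0 < s / t := by
    simpa [mul_div_mul_right _ _ ht] using div_pos hst (mul_self_pos.2 ht)
  rw [segment_eq_image']
  refine ⟨s / t, ⟨hpos.le, ?_⟩, ?_⟩
  · rw [← abs_of_pos hpos, abs_div]
    exact div_le_one_of_le₀ hle (abs_nonneg t)
  · simp only [add_sub_cancel_left, smul_smul, div_mul_cancel₀ _ ht]

theorem mul_pos_of_pos_iff_pos {a b : ℝ} (ha : a ≠ 0) (hb : b ≠ 0) (h : 0 < a ↔ 0 < b) :
    0 < a * b := by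
  rcases ha.lt_or_gt with ha | ha
  · exact mul_pos_of_neg_of_neg ha (hb.lt_of_le (not_lt.1 fun hb' => ha.not_gt (h.2 hb')))
  · exact mul_pos ha (h.1 ha)

theorem Sym2.natCard_subtype_not_isDiag_fin (k : ℕ) :
    Nat.card {s : Sym2 (Fin k) // ¬ s.IsDiag} = k.choose 2 := by
  rw [Nat.card_eq_fintype_card, Sym2.card_subtype_not_diag, Fintype.card_fin]

namespace LineCover

variable {V : Type*} {G : SimpleGraph V} {d k : ℕ} (c : LineCover G d k)

def map {e : ℕ} (f : (Fin d → ℝ) →ᵃ[ℝ] (Fin e → ℝ)) (hf : Set.InjOn f (⋃ i, c.lines i)) :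
    LineCover G e k where
  pos := f ∘ c.pos
  inj _ _ h := c.inj (hf (Set.mem_iUnion.2 (c.coversV _)) (Set.mem_iUnion.2 (c.coversV _)) h)
  lines i := f '' c.lines i
  isLine i := (c.isLine i).image f (hf.mono (Set.subset_iUnion _ i))
  coversV v := (c.coversV v).imp fun _ hi => Set.mem_image_of_mem f hi
  coversE _ _ huv := (c.coversE huv).imp fun _ hi => by
    rw [Function.comp_apply, Function.comp_apply, ← image_segment]
    exact Set.image_mono hi
  noCross u v a b huv hab hne x hx := by
    obtain ⟨hx₁, hx₂⟩ := hx
    rw [Function.comp_apply, Function.comp_apply, ← image_segment] at hx₁ hx₂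
    obtain ⟨y, hy, rfl⟩ := hx₁
    obtain ⟨y', hy', hyy'⟩ := hx₂
    obtain ⟨i, hi⟩ := c.coversE huv
    obtain ⟨j, hj⟩ := c.coversE hab
    obtain rfl : y' = y := hf (Set.mem_iUnion.2 ⟨j, hj hy'⟩) (Set.mem_iUnion.2 ⟨i, hi hy⟩) hyy'
    obtain ⟨w, hw₁, hw₂, rfl⟩ := c.noCross huv hab hne y' ⟨hy, hy'⟩
    exact ⟨w, hw₁, hw₂, rfl⟩

theorem pos_notMem_segment {v x y : V} (hx : G.Adj v x) (hy : G.Adj v y) (hxy : x ≠ y) :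
    c.pos x ∉ segment ℝ (c.pos v) (c.pos y) := by
  intro hmem
  have hne : ({v, x} : Set V) ≠ {v, y} := by
    simp [Set.pair_eq_pair_iff, hxy, hx.ne']
  obtain ⟨w, -, hw, hxw⟩ := c.noCross hx hy hne (c.pos x) ⟨right_mem_segment ℝ _ _, hmem⟩
  obtain rfl := c.inj hxw
  rcases hw with h | h
  exacts [hx.ne' h, hxy h]

theorem ncard_neighborSet_le_two {v : V} {L : Set (Fin d → ℝ)} (hL : IsLine L)
    (hv : c.pos v ∈ L) (hN : ∀ w, G.Adj v w → c.pos w ∈ L) : (G.neighborSet v).ncard ≤ 2 := by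
  obtain ⟨u, -, rfl⟩ := hL.exists_eq_add_smul hv
  choose t ht using fun w : G.neighborSet v => hN w w.2
  have ht0 : ∀ w, t w ≠ 0 := fun w h0 =>
    (w.2 : G.Adj v w).ne' (c.inj (by rw [ht w, h0, zero_smul, add_zero]))
  -- two neighbours on the same side of `v` would put one inside the edge to the other
  have hinj : Function.Injective fun w => decide (0 < t w) := by
    intro w w' h
    by_contra hne
    have hprod := mul_pos_of_pos_iff_pos (ht0 w) (ht0 w') (decide_eq_decide.1 h)
    rcases le_total |t w| |t w'| with hle | hle
    · refine c.pos_notMem_segment w.2 w'.2 (Subtype.coe_ne_coe.2 hne) ?_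
      rw [ht, ht]
      exact add_smul_mem_segment _ _ hprod hle
    · refine c.pos_notMem_segment w'.2 w.2 (Subtype.coe_ne_coe.2 (Ne.symm hne)) ?_
      rw [ht, ht]
      exact add_smul_mem_segment _ _ (mul_comm (t w) _ ▸ hprod) hle
  rw [← Nat.card_coe_set_eq]
  exact (Nat.card_le_card_of_injective _ hinj).trans (by simp)

theorem exists_lines_ne {v : V} (hv : 3 ≤ (G.neighborSet v).ncard) :
    ∃ i j, c.lines i ≠ c.lines j ∧ c.pos v ∈ c.lines i ∧ c.pos v ∈ c.lines j := by
  by_contra! h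
  obtain ⟨w₀, hw₀⟩ := Set.nonempty_of_ncard_ne_zero (by omega : (G.neighborSet v).ncard ≠ 0)
  obtain ⟨i₀, hi₀⟩ := c.coversE hw₀
  have hN : ∀ w, G.Adj v w → c.pos w ∈ c.lines i₀ := by
    intro w hw
    obtain ⟨i, hi⟩ := c.coversE hw
    have : c.lines i = c.lines i₀ := by
      by_contra hne
      exact h i i₀ hne (hi (left_mem_segment ℝ _ _)) (hi₀ (left_mem_segment ℝ _ _))
    exact this ▸ hi (right_mem_segment ℝ _ _)
  have := c.ncard_neighborSet_le_two (c.isLine i₀) (hi₀ (left_mem_segment ℝ _ _)) hN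
  omega

theorem exists_injective_crossingPair {S : Set V}
    (hS : ∀ v ∈ S, 3 ≤ (G.neighborSet v).ncard) :
    ∃ f : S → {s : Sym2 (Fin k) // ¬ s.IsDiag}, Function.Injective f ∧
      ∀ v i j, (f v : Sym2 (Fin k)) = s(i, j) →
        c.lines i ≠ c.lines j ∧ c.pos v ∈ c.lines i ∧ c.pos v ∈ c.lines j := by
  choose i j hij hi hj using fun v : S => c.exists_lines_ne (hS v v.2)
  have hf : ∀ v i' j', s(i v, j v) = s(i', j') →
      c.lines i' ≠ c.lines j' ∧ c.pos v ∈ c.lines i' ∧ c.pos v ∈ c.lines j' := by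
    intro v i' j' h
    rcases Sym2.eq_iff.1 h with ⟨rfl, rfl⟩ | ⟨rfl, rfl⟩
    exacts [⟨hij v, hi v, hj v⟩, ⟨(hij v).symm, hj v, hi v⟩]
  refine ⟨fun v => ⟨s(i v, j v), fun h => hij v (congrArg c.lines (Sym2.mk_isDiag_iff.1 h))⟩,
    fun v w hvw => ?_, hf⟩
  obtain ⟨-, hwi, hwj⟩ := hf w (i v) (j v) (congrArg Subtype.val hvw).symm
  exact Subtype.ext (c.inj ((c.isLine _).eq_of_ne (c.isLine _) (hij v) (hi v) (hj v) hwi hwj))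

theorem ncard_le_choose_two (c : LineCover G d k) {S : Set V}
    (hS : ∀ v ∈ S, 3 ≤ (G.neighborSet v).ncard) :
    S.ncard ≤ k.choose 2 := by
  obtain ⟨f, hf, -⟩ := c.exists_injective_crossingPair hS
  rw [← Nat.card_coe_set_eq, ← Sym2.natCard_subtype_not_isDiag_fin]
  exact Nat.card_le_card_of_injective f hf

theorem lines_pairwise_crossing_of_ncard_eq {S : Set V}
    (hS : ∀ v ∈ S, 3 ≤ (G.neighborSet v).ncard) (h : S.ncard = k.choose 2) :
    (∀ i j, i ≠ j → c.lines i ≠ c.lines j ∧ (c.lines i ∩ c.lines j).Nonempty) ∧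
      ∀ i j l, i ≠ j → i ≠ l → j ≠ l → c.lines i ∩ c.lines j ∩ c.lines l = ∅ := by
  obtain ⟨f, hf, hfl⟩ := c.exists_injective_crossingPair hS
  -- `f` is now a bijection: every pair of lines crosses, at a vertex determined by the pair
  have hsurj : Function.Surjective f := (hf.bijective_of_nat_card_le (by
    rw [Nat.card_coe_set_eq, h, Sym2.natCard_subtype_not_isDiag_fin])).2
  have hvert : ∀ i j, i ≠ j → ∃ v, (f v : Sym2 (Fin k)) = s(i, j) := fun i j hij =>
    (hsurj ⟨s(i, j), Sym2.mk_isDiag_iff.not.2 hij⟩).imp fun _ hv => congrArg Subtype.val hv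
  refine ⟨fun i j hij => ?_, fun i j l hij hil hjl => ?_⟩
  · obtain ⟨v, hv⟩ := hvert i j hij
    obtain ⟨hne, hvi, hvj⟩ := hfl v i j hv
    exact ⟨hne, c.pos v, hvi, hvj⟩
  · refine Set.eq_empty_of_forall_notMem fun x ⟨⟨hxi, hxj⟩, hxl⟩ => hjl ?_
    obtain ⟨v, hv⟩ := hvert i j hij
    obtain ⟨w, hw⟩ := hvert i l hil
    obtain ⟨hij', hvi, hvj⟩ := hfl v i j hv
    obtain ⟨hil', hwi, hwl⟩ := hfl w i l hw
    have hxv := (c.isLine i).eq_of_ne (c.isLine j) hij' hxi hxj hvi hvj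
    have hxw := (c.isLine i).eq_of_ne (c.isLine l) hil' hxi hxl hwi hwl
    obtain rfl : v = w := Subtype.ext (c.inj (hxv.symm.trans hxw))
    exact Sym2.congr_right.1 (hv.symm.trans hw)

theorem exists_isPlane_of_ncard_eq (c : LineCover G 3 k) {S : Set V}
    (hS : ∀ v ∈ S, 3 ≤ (G.neighborSet v).ncard) (h : S.ncard = k.choose 2) :
    ∃ P, IsPlane P ∧ ∀ i, c.lines i ⊆ P :=
  let ⟨hcross, hconc⟩ := c.lines_pairwise_crossing_of_ncard_eq hS h
  exists_isPlane_of_pairwise_crossing c.lines c.isLine hcross hconc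

theorem nonempty_lineCover_two_of_isPlane (c : LineCover G 3 k) {P : Set (Fin 3 → ℝ)}
    (hP : IsPlane P) (hc : ∀ i, c.lines i ⊆ P) : Nonempty (LineCover G 2 k) :=
  let ⟨f, hf⟩ := hP.exists_injOn
  ⟨c.map f (hf.mono (Set.iUnion_subset hc))⟩

end LineCover

section rho1

variable {V : Type*} {G : SimpleGraph V} {d : ℕ}

theorem rho1_le {k : ℕ} (c : LineCover G d k) : rho1 G d ≤ k :=
  Nat.sInf_le ⟨c⟩

theorem nonempty_lineCover_rho1 (h : ∃ k, Nonempty (LineCover G d k)) :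
    Nonempty (LineCover G d (rho1 G d)) :=
  Nat.sInf_mem h

theorem rho1_le_rho1 {e : ℕ} (hde : d ≤ e) (h : ∃ k, Nonempty (LineCover G d k)) :
    rho1 G e ≤ rho1 G d := by
  obtain ⟨c⟩ := nonempty_lineCover_rho1 h
  have hf : Function.Injective (Function.ExtendByZero.linearMap ℝ (Fin.castLE hde)).toAffineMap :=
    Function.extend_injective (Fin.castLE_injective hde) 0
  exact rho1_le (c.map _ hf.injOn)

end rho1

/-- If `G` has exactly `C(k,2)` vertices of degree 4 and admits a straight-line drawing
in `ℝ³` covered by `k` lines, then in every such cover all `k` lines lie in a common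
plane; consequently `ρ¹_3(G) = ρ¹_2(G)`. -/
theorem stmt_6 {V : Type*} (G : SimpleGraph V) (k : ℕ)
    (hdeg : {v : V | (G.neighborSet v).ncard = 4}.ncard = k.choose 2)
    (hcov : Nonempty (LineCover G 3 k)) :
    (∀ c : LineCover G 3 k, ∃ P, IsPlane P ∧ ∀ i, c.lines i ⊆ P) ∧
      rho1 G 3 = rho1 G 2 := by
  have hS : ∀ v ∈ {v : V | (G.neighborSet v).ncard = 4}, 3 ≤ (G.neighborSet v).ncard :=
    fun v hv => hv.ge.trans' (by norm_num)
  have hplanar (c : LineCover G 3 k) := c.exists_isPlane_of_ncard_eq hS hdeg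
  refine ⟨hplanar, le_antisymm ?_ ?_⟩
  · obtain ⟨c⟩ := hcov
    obtain ⟨P, hP, hc⟩ := hplanar c
    exact rho1_le_rho1 (by norm_num) ⟨k, c.nonempty_lineCover_two_of_isPlane hP hc⟩
  · obtain ⟨c⟩ := nonempty_lineCover_rho1 ⟨k, hcov⟩
    obtain ⟨c₀⟩ := hcov
    -- `#deg₄ ≤ C(ρ, 2) ≤ C(k, 2) = #deg₄`, so an optimal cover is extremal as well
    have hm : {v : V | (G.neighborSet v).ncard = 4}.ncard = (rho1 G 3).choose 2 :=
      (c.ncard_le_choose_two hS).antisymm (hdeg ▸ Nat.choose_le_choose 2 (rho1_le c₀))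
    obtain ⟨P, hP, hc⟩ := c.exists_isPlane_of_ncard_eq hS hm
    obtain ⟨c₂⟩ := c.nonempty_lineCover_two_of_isPlane hP hc
    exact rho1_le c₂
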